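/- Let b_k be as defined and m ≥ 0 a fixed integer. Then there exists a constant C_4 = C_4(m), independent of n, such that for all sufficiently large integers g and all even n ≥ 2: g^{⌊2m/3⌋}·|b_{3g+3n/2-3-m}| ≤ C_4·|b_{3g+3n/2-3}|. -/

import Mathlib

/-!
With `a h = (6h-1)!!/(24^h h!)` (`bFactor h`) one has `|b_{3h}| = a h`,
`|b_{3h+1}| = (6h+1)/2 · a h`, `|b_{3h+2}| = (6h+7)/(6h+5) · a (h+1)` and
`a (h+1) / a h = (6h+5)(6h+3)(6h+1)/(24(h+1))`. So lowering the index by one from `3h+3` loses at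
most a factor `2`, while lowering it from `3h+2` or from `3h+1` gains a factor of at least `h`.
Of `m` consecutive steps down from `3H = 3g + 3n/2 - 3`, exactly `⌊2m/3⌋` are of the second
kind, and each gains at least `H - m`, which is at least `g/2` once `g ≥ 2m`.
-/

/-- The sequence b_k (k ≥ -1) from the paper:
b_{3g} = -(6g-1)!!/(24^g g!), b_{3g-1} = ((6g+1)/(6g-1))·(6g-1)!!/(24^g g!),
b_{3g-2} = (1/2)·(6g-5)!!/(24^{g-1} (g-1)!), with (-1)!! = 1. -/
def bInt (k : ℤ) : ℚ :=
  if k % 3 = 0 then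
    -((6 * (k / 3) - 1).toNat.doubleFactorial : ℚ)
      / (24 ^ (k / 3).toNat * ((k / 3).toNat.factorial : ℚ))
  else if k % 3 = 2 then
    ((6 * (((k + 1) / 3 : ℤ) : ℚ) + 1) / (6 * (((k + 1) / 3 : ℤ) : ℚ) - 1)) *
      (((6 * ((k + 1) / 3) - 1).toNat.doubleFactorial : ℚ)
        / (24 ^ ((k + 1) / 3).toNat * (((k + 1) / 3).toNat.factorial : ℚ)))
  else
    (1 / 2 : ℚ) * (((6 * ((k + 2) / 3) - 5).toNat.doubleFactorial : ℚ)
      / (24 ^ ((k + 2) / 3 - 1).toNat * (((k + 2) / 3 - 1).toNat.factorial : ℚ)))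

def bFactor (h : ℕ) : ℚ := ((6 * h - 1).doubleFactorial : ℚ) / (24 ^ h * h.factorial)

lemma bFactor_pos (h : ℕ) : 0 < bFactor h := by
  unfold bFactor
  positivity

lemma doubleFactorial_six_mul_add_one (h : ℕ) :
    (6 * h + 1).doubleFactorial = (6 * h + 1) * (6 * h - 1).doubleFactorial := by
  cases h with
  | zero => rfl
  | succ h =>
    rw [show 6 * (h + 1) + 1 = (6 * h + 5) + 2 by ring, Nat.doubleFactorial_add_two]
    rfl

lemma bFactor_succ (h : ℕ) :
    bFactor (h + 1) =
      (6 * h + 5) * (6 * h + 3) * (6 * h + 1) / (24 * (h + 1)) * bFactor h := by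
  have hdf : (6 * (h + 1) - 1).doubleFactorial =
      (6 * h + 5) * (6 * h + 3) * ((6 * h + 1) * (6 * h - 1).doubleFactorial) := by
    rw [show 6 * (h + 1) - 1 = (6 * h + 3) + 2 by omega, Nat.doubleFactorial_add_two,
      show 6 * h + 3 = (6 * h + 1) + 2 by ring, Nat.doubleFactorial_add_two,
      doubleFactorial_six_mul_add_one]
    ring
  unfold bFactor
  rw [hdf, Nat.factorial_succ]
  push_cast
  field_simp
  ring

lemma abs_bInt_three_mul (h : ℕ) : |bInt (3 * h)| = bFactor h := by
  have hidx : (3 * (h : ℤ)) / 3 = h := by omega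
  rw [bInt, if_pos (by omega), hidx, show (6 * (h : ℤ) - 1).toNat = 6 * h - 1 by omega,
    Int.toNat_natCast, neg_div, abs_neg]
  exact abs_of_pos (bFactor_pos h)

lemma abs_bInt_three_mul_add_one (h : ℕ) :
    |bInt (3 * h + 1)| = (6 * h + 1) / 2 * bFactor h := by
  have hidx : (3 * (h : ℤ) + 1 + 2) / 3 = h + 1 := by omega
  rw [bInt, if_neg (by omega), if_neg (by omega), hidx,
    show (6 * ((h : ℤ) + 1) - 5).toNat = 6 * h + 1 by omega, add_sub_cancel_right,
    Int.toNat_natCast, doubleFactorial_six_mul_add_one, abs_of_pos (by positivity)]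
  unfold bFactor
  push_cast
  ring

lemma abs_bInt_three_mul_add_two (h : ℕ) :
    |bInt (3 * h + 2)| = (6 * h + 7) / (6 * h + 5) * bFactor (h + 1) := by
  have hidx : (3 * (h : ℤ) + 2 + 1) / 3 = ((h + 1 : ℕ) : ℤ) := by omega
  rw [bInt, if_neg (by omega), if_pos (by omega), hidx,
    show (6 * ((h + 1 : ℕ) : ℤ) - 1).toNat = 6 * (h + 1) - 1 by omega, Int.toNat_natCast]
  push_cast
  rw [show (6 * ((h : ℚ) + 1) + 1) / (6 * ((h : ℚ) + 1) - 1) = (6 * h + 7) / (6 * h + 5) by ring,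
    abs_mul, abs_of_pos (by positivity)]
  exact congrArg _ (abs_of_pos (bFactor_pos (h + 1)))

lemma abs_bInt_three_mul_add_two_le (h : ℕ) :
    |bInt (3 * h + 2)| ≤ 2 * |bInt (3 * (h + 1 : ℕ))| := by
  rw [abs_bInt_three_mul_add_two, abs_bInt_three_mul]
  have hratio : (6 * h + 7 : ℚ) / (6 * h + 5) ≤ 2 := by
    rw [div_le_iff₀ (by positivity)]
    linarith [(h.cast_nonneg : (0 : ℚ) ≤ h)]
  exact mul_le_mul_of_nonneg_right hratio (bFactor_pos _).le

lemma mul_abs_bInt_three_mul_add_one_le {x : ℚ} {h : ℕ} (hx : x ≤ h + 1) :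
    x * |bInt (3 * h + 1)| ≤ |bInt (3 * h + 2)| := by
  rw [abs_bInt_three_mul_add_one, abs_bInt_three_mul_add_two, bFactor_succ]
  have hgain : x * ((6 * h + 1) / 2) ≤
      (6 * h + 7) / (6 * h + 5) * ((6 * h + 5) * (6 * h + 3) * (6 * h + 1) / (24 * (h + 1))) :=
    calc x * ((6 * h + 1) / 2) ≤ (h + 1) * ((6 * h + 1) / 2) :=
          mul_le_mul_of_nonneg_right hx (by positivity)
      _ ≤ _ := by
          field_simp
          nlinarith
  rw [← mul_assoc, ← mul_assoc]
  exact mul_le_mul_of_nonneg_right hgain (bFactor_pos h).le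

lemma mul_abs_bInt_three_mul_le {x : ℚ} {h : ℕ} (hx : x ≤ h) :
    x * |bInt (3 * h)| ≤ |bInt (3 * h + 1)| := by
  rw [abs_bInt_three_mul, abs_bInt_three_mul_add_one]
  have hh : (0 : ℚ) ≤ h := h.cast_nonneg
  exact mul_le_mul_of_nonneg_right (by linarith) (bFactor_pos h).le

lemma pow_mul_abs_bInt_sub_succ_le {x : ℚ} (hx : 0 ≤ x) {j H : ℕ} (hjH : x + (j + 1 : ℕ) ≤ H) :
    x ^ (2 * (j + 1) / 3) * |bInt (3 * H - (j + 1 : ℕ))| ≤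
      2 * (x ^ (2 * j / 3) * |bInt (3 * H - j)|) := by
  have hjH' : j + 1 ≤ H := by exact_mod_cast (le_add_of_nonneg_left hx).trans hjH
  obtain ⟨h, rfl⟩ : ∃ h, H = h + j + 1 := ⟨H - (j + 1), by omega⟩
  have hxh : x ≤ h := by push_cast at hjH; linarith
  have hb : 0 ≤ x ^ (2 * j / 3) := pow_nonneg hx _
  obtain ⟨q, r, hr, rfl⟩ : ∃ q r, r < 3 ∧ j = 3 * q + r :=
    ⟨j / 3, j % 3, Nat.mod_lt _ (by norm_num), (Nat.div_add_mod j 3).symm⟩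
  interval_cases r
  · rw [show 2 * (3 * q + 0 + 1) / 3 = 2 * (3 * q + 0) / 3 by omega,
      show 3 * ((h + (3 * q + 0) + 1 : ℕ) : ℤ) - ((3 * q + 0 + 1 : ℕ) : ℤ) =
        3 * ((h + 2 * q : ℕ) : ℤ) + 2 by push_cast; ring,
      show 3 * ((h + (3 * q + 0) + 1 : ℕ) : ℤ) - ((3 * q + 0 : ℕ) : ℤ) =
        3 * ((h + 2 * q + 1 : ℕ) : ℤ) by push_cast; ring]
    nlinarith [abs_bInt_three_mul_add_two_le (h + 2 * q)]
  · rw [show 2 * (3 * q + 1 + 1) / 3 = 2 * (3 * q + 1) / 3 + 1 by omega, pow_succ,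
      show 3 * ((h + (3 * q + 1) + 1 : ℕ) : ℤ) - ((3 * q + 1 + 1 : ℕ) : ℤ) =
        3 * ((h + 2 * q + 1 : ℕ) : ℤ) + 1 by push_cast; ring,
      show 3 * ((h + (3 * q + 1) + 1 : ℕ) : ℤ) - ((3 * q + 1 : ℕ) : ℤ) =
        3 * ((h + 2 * q + 1 : ℕ) : ℤ) + 2 by push_cast; ring]
    have hgain := mul_abs_bInt_three_mul_add_one_le (x := x) (h := h + 2 * q + 1)
      (by push_cast; linarith)
    nlinarith [abs_nonneg (bInt (3 * ((h + 2 * q + 1 : ℕ) : ℤ) + 2))]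
  · rw [show 2 * (3 * q + 2 + 1) / 3 = 2 * (3 * q + 2) / 3 + 1 by omega, pow_succ,
      show 3 * ((h + (3 * q + 2) + 1 : ℕ) : ℤ) - ((3 * q + 2 + 1 : ℕ) : ℤ) =
        3 * ((h + 2 * q + 2 : ℕ) : ℤ) by push_cast; ring,
      show 3 * ((h + (3 * q + 2) + 1 : ℕ) : ℤ) - ((3 * q + 2 : ℕ) : ℤ) =
        3 * ((h + 2 * q + 2 : ℕ) : ℤ) + 1 by push_cast; ring]
    have hgain := mul_abs_bInt_three_mul_le (x := x) (h := h + 2 * q + 2)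
      (by push_cast; linarith)
    nlinarith [abs_nonneg (bInt (3 * ((h + 2 * q + 2 : ℕ) : ℤ) + 1))]

lemma pow_mul_abs_bInt_sub_le {x : ℚ} (hx : 0 ≤ x) (j : ℕ) {H : ℕ} (hjH : x + j ≤ H) :
    x ^ (2 * j / 3) * |bInt (3 * H - j)| ≤ 2 ^ j * |bInt (3 * H)| := by
  induction j with
  | zero => simp
  | succ j ih =>
    have hstep := pow_mul_abs_bInt_sub_succ_le hx hjH
    have hprev := ih (by push_cast at hjH ⊢; linarith)
    rw [pow_succ]
    linarith

/-- for fixed m ≥ 0 there is a constant C₄ = C₄(m), independent of n,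
such that for all sufficiently large g and all even n ≥ 2:
g^⌊2m/3⌋·|b_{3g+3n/2-3-m}| ≤ C₄·|b_{3g+3n/2-3}|. -/
theorem stmt19 (m : ℕ) :
    ∃ C4 : ℚ, 0 < C4 ∧ ∃ G0 : ℕ, ∀ g : ℕ, G0 ≤ g → ∀ n : ℕ, Even n → 2 ≤ n →
      (g : ℚ) ^ ((2 * m) / 3) * |bInt (3 * (g : ℤ) + 3 * ((n : ℤ) / 2) - 3 - m)|
        ≤ C4 * |bInt (3 * (g : ℤ) + 3 * ((n : ℤ) / 2) - 3)| := by
  refine ⟨2 ^ (2 * m / 3) * 2 ^ m, by positivity, 2 * m, fun g hg n ⟨t, ht⟩ hn => ?_⟩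
  obtain ⟨s, rfl⟩ : ∃ s, t = s + 1 := ⟨t - 1, by omega⟩
  rw [show 3 * (g : ℤ) + 3 * ((n : ℤ) / 2) - 3 = 3 * ((g + s : ℕ) : ℤ) by omega]
  have hx : (g : ℚ) / 2 + m ≤ (g + s : ℕ) := by
    have hmg : (2 * m : ℚ) ≤ g := by exact_mod_cast hg
    push_cast
    linarith [(s.cast_nonneg : (0 : ℚ) ≤ s)]
  calc (g : ℚ) ^ (2 * m / 3) * |bInt (3 * ((g + s : ℕ) : ℤ) - m)|
      = 2 ^ (2 * m / 3) * (((g : ℚ) / 2) ^ (2 * m / 3) * |bInt (3 * ((g + s : ℕ) : ℤ) - m)|) := by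
        rw [div_pow]; field_simp
    _ ≤ 2 ^ (2 * m / 3) * (2 ^ m * |bInt (3 * ((g + s : ℕ) : ℤ))|) :=
        mul_le_mul_of_nonneg_left (pow_mul_abs_bInt_sub_le (by positivity) m hx) (by positivity)
    _ = _ := by ring
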